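/- Let p ∈ (1,2) and a > 0, and let ψ : [0,1) → [0,∞) be continuously differentiable with ψ(0) = 0, ψ(y) > 0 for y ∈ (0,1), satisfying ψ'(y) + (p/(p-1)) ψ(y)^{(p-1)/p} = (p a^{2-p}/(p-1))(1-y) for all y ∈ (0,1). If ψ(y)(1-y)^{-p} → 0 as y → 1, then lim_{y→1} ψ(y)(1-y)^{-p/(p-1)} = a^{p(2-p)/(p-1)}. -/

import Mathlib

open Set Filter Topology

/-!
Put `q = p/(p-1) > 2` and `b = a^(2-p)`, so that the equation reads `ψ' = q (b (1-y) - ψ^(1/q))`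
and the claim is `ψ^(1/q) / (1-y) → b`. The curves `(β (1-y))^q` are barriers near `y = 1`: the
derivative of such a curve is `O((1-y)^(q-1)) = o(1-y)`, so on the wrong side of it the gap between
`ψ` and the curve shrinks at a rate `≳ 1-y`, which beats any initial gap of size `o((1-y)^2)`.
Below the curve with `β < b` the gap is at most `(β (1-y))^q`. For `β > b` it suffices that `ψ`
lies below the curve at points arbitrarily close to `1`; if not, `ψ^(1/p) = ψ^(1-1/q)` decreases
at a rate bounded below, so it stays above a multiple of `1-y`, contradicting `ψ = o((1-y)^p)`.
-/

/-- `ψ : [0,1) → [0,∞)` is continuously differentiable (with derivative `ψd`), `ψ(0) = 0`,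
and `ψ' + (p/(p-1)) ψ^{(p-1)/p} = (p a^{2-p}/(p-1))(1-y)` holds on `(0,1)`. -/
def PsiSol (p a : ℝ) (ψ ψd : ℝ → ℝ) : Prop :=
  (∀ y ∈ Set.Ico (0:ℝ) 1, HasDerivWithinAt ψ (ψd y) (Set.Ico 0 1) y) ∧
  ContinuousOn ψd (Set.Ico 0 1) ∧
  (∀ y ∈ Set.Ico (0:ℝ) 1, 0 ≤ ψ y) ∧
  ψ 0 = 0 ∧
  (∀ y ∈ Set.Ioo (0:ℝ) 1,
    ψd y + (p/(p-1)) * ψ y ^ ((p-1)/p) = (p * a ^ (2-p) / (p-1)) * (1-y))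

lemma le_max_zero_of_deriv_le_of_nonneg {f f' g g' : ℝ → ℝ} {a b : ℝ} (hab : a ≤ b)
    (hf : ContinuousOn f (Icc a b)) (hf' : ∀ x ∈ Ico a b, HasDerivWithinAt f (f' x) (Ici x) x)
    (hg : ∀ x, HasDerivAt g (g' x) x) (hg'_neg : ∀ x ∈ Ico a b, g' x < 0) (ha : f a ≤ g a)
    (bound : ∀ x ∈ Ico a b, 0 ≤ f x → f' x ≤ g' x) : f b ≤ max 0 (g b) := by
  by_cases hzero : ∃ s ∈ Icc a b, f s ≤ 0
  · obtain ⟨s, hs, hfs⟩ := hzero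
    have hsb : Icc s b ⊆ Icc a b := Icc_subset_Icc_left hs.1
    have : f b ≤ 0 :=
      image_le_of_deriv_right_lt_deriv_boundary (hf.mono hsb)
        (fun x hx => hf' x ⟨hs.1.trans hx.1, hx.2⟩) (B' := 0) hfs (fun _ => hasDerivAt_const _ _)
        (fun x hx hfx => (bound x ⟨hs.1.trans hx.1, hx.2⟩ hfx.ge).trans_lt
          (hg'_neg x ⟨hs.1.trans hx.1, hx.2⟩)) (right_mem_Icc.2 hs.2)
    exact this.trans (le_max_left _ _)
  · push Not at hzero
    exact (image_le_of_deriv_right_le_deriv_boundary hf hf' ha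
      (fun x _ => (hg x).continuousAt.continuousWithinAt) (fun x _ => (hg x).hasDerivWithinAt)
      (fun x hx => bound x hx (hzero x (Ico_subset_Icc_self hx)).le) (right_mem_Icc.2 hab)).trans
      (le_max_right _ _)

lemma eventually_nonpos_of_deriv_le {f f' : ℝ → ℝ} {c : ℝ} (hc : 0 < c)
    (hf : ∀ᶠ t in 𝓝[<] (1 : ℝ), HasDerivAt f (f' t) t ∧ (0 ≤ f t → f' t ≤ -(c * (1 - t))))
    (hsmall : ∃ᶠ t in 𝓝[<] (1 : ℝ), f t ≤ c / 4 * (1 - t) ^ 2) :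
    ∀ᶠ t in 𝓝[<] (1 : ℝ), f t ≤ 0 := by
  obtain ⟨l, hl, hsub⟩ := mem_nhdsLT_iff_exists_Ioo_subset.1 hf
  obtain ⟨Y, hfY, hY⟩ := (hsmall.and_eventually (Ioo_mem_nhdsLT hl)).exists
  -- on `[Y, y]` the comparison function drops by at least `3c/8 (1-Y)^2 > f Y`
  filter_upwards [Ioo_mem_nhdsLT (show (1 + Y) / 2 < 1 by linarith [hY.2])] with y hy
  have hYy : Icc Y y ⊆ Ioo l 1 := fun x hx => ⟨hY.1.trans_le hx.1, hx.2.trans_lt hy.2⟩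
  have hg : ∀ x, HasDerivAt (fun x => f Y - c / 2 * (1 - Y) ^ 2 + c / 2 * (1 - x) ^ 2)
      (-(c * (1 - x))) x := fun x =>
    (((((hasDerivAt_id' x).const_sub 1).fun_pow 2).const_mul (c / 2)).const_add _).congr_deriv
      (by norm_num; ring)
  have key := le_max_zero_of_deriv_le_of_nonneg (by linarith [hy.1, hY.2])
    (fun x hx => (hsub (hYy hx)).1.continuousAt.continuousWithinAt)
    (fun x hx => (hsub (hYy (Ico_subset_Icc_self hx))).1.hasDerivWithinAt) hg
    (fun x hx => by nlinarith [(hYy (Ico_subset_Icc_self hx)).2]) (by simp)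
    (fun x hx => (hsub (hYy (Ico_subset_Icc_self hx))).2)
  have hsq : (1 - y) ^ 2 ≤ (1 - Y) ^ 2 / 4 := by nlinarith [hy.1, hy.2]
  refine key.trans (max_le le_rfl ?_)
  nlinarith [mul_le_mul_of_nonneg_left hsq hc.le, mul_nonneg hc.le (sq_nonneg (1 - Y))]

lemma eventually_mul_one_sub_le_of_deriv_le {u u' : ℝ → ℝ} {m : ℝ}
    (hu : ∀ᶠ t in 𝓝[<] (1 : ℝ), HasDerivAt u (u' t) t ∧ u' t ≤ -m ∧ 0 ≤ u t) :
    ∀ᶠ t in 𝓝[<] (1 : ℝ), m * (1 - t) ≤ u t := by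
  obtain ⟨l, hl, hsub⟩ := mem_nhdsLT_iff_exists_Ioo_subset.1 hu
  have hanti : AntitoneOn (fun t => u t + m * t) (Ioo l 1) := by
    refine antitoneOn_of_hasDerivWithinAt_nonpos (convex_Ioo l 1)
      (fun x hx =>
        ((hsub hx).1.add ((hasDerivAt_id' x).const_mul m)).continuousAt.continuousWithinAt)
      (fun x hx => ((hsub (interior_subset hx)).1.add
        ((hasDerivAt_id' x).const_mul m)).hasDerivWithinAt) (fun x hx => ?_)
    linarith [(hsub (interior_subset hx)).2.1]
  filter_upwards [Ioo_mem_nhdsLT hl] with t ht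
  have hlim : Tendsto (fun y => m * y) (𝓝[<] (1 : ℝ)) (𝓝 (m * 1)) :=
    ((continuous_const.mul continuous_id).tendsto 1).mono_left nhdsWithin_le_nhds
  have hle : ∀ᶠ y in 𝓝[<] (1 : ℝ), m * y ≤ u t + m * t := by
    filter_upwards [Ioo_mem_nhdsLT ht.2] with y hy
    have := hanti ht ⟨ht.1.trans hy.1, hy.2⟩ hy.1.le
    linarith [(hsub ⟨ht.1.trans hy.1, hy.2⟩).2.2]
  linarith [le_of_tendsto hlim hle]

lemma eventually_mul_one_sub_rpow_le {r s : ℝ} (hsr : s < r) (K : ℝ) {ε : ℝ} (hε : 0 < ε) :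
    ∀ᶠ t in 𝓝[<] (1 : ℝ), K * (1 - t) ^ r ≤ ε * (1 - t) ^ s := by
  have hlim : Tendsto (fun t : ℝ => K * (1 - t) ^ (r - s)) (𝓝 1) (𝓝 0) := by
    have : ContinuousAt (fun t : ℝ => K * (1 - t) ^ (r - s)) 1 :=
      continuousAt_const.mul ((continuousAt_const.sub continuousAt_id).rpow_const
        (Or.inr (sub_pos.2 hsr).le))
    simpa [Real.zero_rpow (sub_pos.2 hsr).ne'] using this.tendsto
  filter_upwards [((tendsto_order.1 hlim).2 ε hε).filter_mono nhdsWithin_le_nhds,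
    self_mem_nhdsWithin] with t ht ht1
  have h1t : 0 < 1 - t := sub_pos.2 ht1
  calc K * (1 - t) ^ r = K * (1 - t) ^ (r - s) * (1 - t) ^ s := by
        rw [mul_assoc, ← Real.rpow_add h1t, sub_add_cancel]
    _ ≤ ε * (1 - t) ^ s := by gcongr

lemma hasDerivAt_mul_one_sub_rpow (β : ℝ) {q : ℝ} (hq : 1 ≤ q) (t : ℝ) :
    HasDerivAt (fun t => (β * (1 - t)) ^ q) (-(q * β * (β * (1 - t)) ^ (q - 1))) t :=
  ((((hasDerivAt_id' t).const_sub 1).const_mul β).rpow_const (Or.inr hq)).congr_deriv (by ring)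

section Barrier

variable {q b β : ℝ} {ψ : ℝ → ℝ}

lemma eventually_mul_one_sub_le_rpow_inv (hq : 2 < q)
    (hψ : ∀ᶠ t in 𝓝[<] (1 : ℝ), HasDerivAt ψ (q * (b * (1 - t) - ψ t ^ q⁻¹)) t)
    (hψ0 : ∀ᶠ t in 𝓝[<] (1 : ℝ), 0 ≤ ψ t) (hβ : 0 ≤ β) (hβb : β < b) :
    ∀ᶠ t in 𝓝[<] (1 : ℝ), β * (1 - t) ≤ ψ t ^ q⁻¹ := by
  have hq0 : 0 < q := by linarith
  have hc : 0 < q * (b - β) := mul_pos hq0 (sub_pos.2 hβb)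
  have key : ∀ᶠ t in 𝓝[<] (1 : ℝ), (β * (1 - t)) ^ q - ψ t ≤ 0 := by
    refine eventually_nonpos_of_deriv_le
      (f' := fun t => -(q * β * (β * (1 - t)) ^ (q - 1)) - q * (b * (1 - t) - ψ t ^ q⁻¹)) hc ?_ ?_
    · filter_upwards [hψ, hψ0, self_mem_nhdsWithin] with t hd h0 ht
      have h1t : 0 ≤ 1 - t := sub_nonneg.2 (le_of_lt ht)
      refine ⟨(hasDerivAt_mul_one_sub_rpow β (by linarith) t).sub hd, fun hf => ?_⟩
      have hle : ψ t ^ q⁻¹ ≤ β * (1 - t) :=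
        (Real.rpow_inv_le_iff_of_pos h0 (by positivity) hq0).2 (by linarith)
      have hslope : 0 ≤ q * β * (β * (1 - t)) ^ (q - 1) := by positivity
      nlinarith [mul_le_mul_of_nonneg_left hle hq0.le]
    · refine Eventually.frequently ?_
      filter_upwards [hψ0, self_mem_nhdsWithin,
        eventually_mul_one_sub_rpow_le hq (β ^ q) (by positivity : 0 < q * (b - β) / 4)] with t h0 ht h
      rw [Real.mul_rpow hβ (sub_pos.2 ht).le]
      rw [Real.rpow_two] at h
      linarith
  filter_upwards [key, hψ0, self_mem_nhdsWithin] with t h h0 ht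
  exact (Real.le_rpow_inv_iff_of_pos (mul_nonneg hβ (sub_pos.2 ht).le) h0 hq0).2 (by linarith)

lemma frequently_rpow_inv_le_mul_one_sub (hq : 1 < q) (hb : 0 ≤ b)
    (hψ : ∀ᶠ t in 𝓝[<] (1 : ℝ), HasDerivAt ψ (q * (b * (1 - t) - ψ t ^ q⁻¹)) t)
    (hψ0 : ∀ᶠ t in 𝓝[<] (1 : ℝ), 0 < ψ t)
    (hsmall : Tendsto (fun t => ψ t ^ (1 - q⁻¹) / (1 - t)) (𝓝[<] (1 : ℝ)) (𝓝 0)) (hβ : b < β) :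
    ∃ᶠ t in 𝓝[<] (1 : ℝ), ψ t ^ q⁻¹ ≤ β * (1 - t) := by
  by_contra h
  rw [not_frequently] at h
  have hβ0 : 0 < β := hb.trans_lt hβ
  set m := (q - 1) * (β - b) / β
  have hm : 0 < m := div_pos (mul_pos (sub_pos.2 hq) (sub_pos.2 hβ)) hβ0
  -- `ψ ^ (1 - 1/q)` decreases at a rate at least `m` while `ψ ^ (1/q)` stays above `β (1 - t)`
  have hlow : ∀ᶠ t in 𝓝[<] (1 : ℝ), m * (1 - t) ≤ ψ t ^ (1 - q⁻¹) := by
    refine eventually_mul_one_sub_le_of_deriv_le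
      (u' := fun t => q * (b * (1 - t) - ψ t ^ q⁻¹) * (1 - q⁻¹) * ψ t ^ (1 - q⁻¹ - 1)) ?_
    filter_upwards [hψ, hψ0, h] with t hd h0 hgt
    refine ⟨hd.rpow_const (Or.inl h0.ne'), ?_, (Real.rpow_pos_of_pos h0 _).le⟩
    have hw0 : 0 < ψ t ^ q⁻¹ := Real.rpow_pos_of_pos h0 _
    have hrate : (b * (1 - t) - ψ t ^ q⁻¹) / ψ t ^ q⁻¹ ≤ (b - β) / β := by
      rw [div_le_div_iff₀ hw0 hβ0]
      nlinarith [mul_le_mul_of_nonneg_left (not_le.1 hgt).le hb]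
    calc q * (b * (1 - t) - ψ t ^ q⁻¹) * (1 - q⁻¹) * ψ t ^ (1 - q⁻¹ - 1)
        = (q - 1) * ((b * (1 - t) - ψ t ^ q⁻¹) / ψ t ^ q⁻¹) := by
          rw [show 1 - q⁻¹ - 1 = -q⁻¹ by ring, Real.rpow_neg h0.le]
          field_simp
      _ ≤ (q - 1) * ((b - β) / β) := mul_le_mul_of_nonneg_left hrate (sub_pos.2 hq).le
      _ = -m := by ring
  obtain ⟨t, hlow, hup, ht⟩ :=
    (hlow.and (((tendsto_order.1 hsmall).2 m hm).and self_mem_nhdsWithin)).exists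
  rw [div_lt_iff₀ (sub_pos.2 ht)] at hup
  linarith

lemma eventually_rpow_inv_le_mul_one_sub (hq : 2 < q) (hb : 0 ≤ b)
    (hψ : ∀ᶠ t in 𝓝[<] (1 : ℝ), HasDerivAt ψ (q * (b * (1 - t) - ψ t ^ q⁻¹)) t)
    (hψ0 : ∀ᶠ t in 𝓝[<] (1 : ℝ), 0 ≤ ψ t) (hβ : b < β)
    (hfreq : ∃ᶠ t in 𝓝[<] (1 : ℝ), ψ t ^ q⁻¹ ≤ β * (1 - t)) :
    ∀ᶠ t in 𝓝[<] (1 : ℝ), ψ t ^ q⁻¹ ≤ β * (1 - t) := by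
  have hq0 : 0 < q := by linarith
  have hβ0 : 0 ≤ β := hb.trans hβ.le
  have hc : 0 < q * (β - b) / 2 := by have := sub_pos.2 hβ; positivity
  have key : ∀ᶠ t in 𝓝[<] (1 : ℝ), ψ t - (β * (1 - t)) ^ q ≤ 0 := by
    refine eventually_nonpos_of_deriv_le
      (f' := fun t => q * (b * (1 - t) - ψ t ^ q⁻¹) + q * β * (β * (1 - t)) ^ (q - 1)) hc ?_ ?_
    · filter_upwards [hψ, hψ0, self_mem_nhdsWithin, eventually_mul_one_sub_rpow_le
        (by linarith : (1 : ℝ) < q - 1) (β * β ^ (q - 1)) (by linarith : 0 < (β - b) / 2)]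
        with t hd h0 ht hslope
      have h1t : 0 ≤ 1 - t := sub_nonneg.2 (le_of_lt ht)
      refine ⟨hd.sub (hasDerivAt_mul_one_sub_rpow β (by linarith) t) |>.congr_deriv (by ring),
        fun hf => ?_⟩
      have hge : β * (1 - t) ≤ ψ t ^ q⁻¹ :=
        (Real.le_rpow_inv_iff_of_pos (by positivity) h0 hq0).2 (by linarith)
      rw [Real.rpow_one] at hslope
      rw [Real.mul_rpow hβ0 h1t]
      nlinarith [mul_le_mul_of_nonneg_left hge hq0.le, mul_le_mul_of_nonneg_left hslope hq0.le]
    · refine (hfreq.and_eventually (hψ0.and self_mem_nhdsWithin)).mono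
        fun t ⟨hle, h0, ht⟩ => ?_
      have := (Real.rpow_inv_le_iff_of_pos h0 (mul_nonneg hβ0 (sub_pos.2 ht).le) hq0).1 hle
      nlinarith [sq_nonneg (1 - t)]
  filter_upwards [key, hψ0, self_mem_nhdsWithin] with t h h0 ht
  exact (Real.rpow_inv_le_iff_of_pos h0 (mul_nonneg hβ0 (sub_pos.2 ht).le) hq0).2 (by linarith)

lemma tendsto_rpow_inv_div_one_sub (hq : 2 < q) (hb : 0 < b)
    (hψ : ∀ᶠ t in 𝓝[<] (1 : ℝ), HasDerivAt ψ (q * (b * (1 - t) - ψ t ^ q⁻¹)) t)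
    (hψ0 : ∀ᶠ t in 𝓝[<] (1 : ℝ), 0 < ψ t)
    (hsmall : Tendsto (fun t => ψ t ^ (1 - q⁻¹) / (1 - t)) (𝓝[<] (1 : ℝ)) (𝓝 0)) :
    Tendsto (fun t => ψ t ^ q⁻¹ / (1 - t)) (𝓝[<] (1 : ℝ)) (𝓝 b) := by
  have hψ0' : ∀ᶠ t in 𝓝[<] (1 : ℝ), 0 ≤ ψ t := hψ0.mono fun _ => le_of_lt
  refine tendsto_order.2 ⟨fun x hx => ?_, fun x hx => ?_⟩
  · obtain ⟨β, hxβ, hβb⟩ := exists_between (max_lt hx hb)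
    filter_upwards [eventually_mul_one_sub_le_rpow_inv hq hψ hψ0'
      ((le_max_right x 0).trans hxβ.le) hβb, self_mem_nhdsWithin] with t h ht
    rw [lt_div_iff₀ (sub_pos.2 ht)]
    nlinarith [(le_max_left x 0).trans_lt hxβ, sub_pos.2 (show t < 1 from ht)]
  · obtain ⟨β, hbβ, hβx⟩ := exists_between hx
    filter_upwards [eventually_rpow_inv_le_mul_one_sub hq hb.le hψ hψ0' hbβ
      (frequently_rpow_inv_le_mul_one_sub (by linarith) hb.le hψ hψ0 hsmall hbβ),
      self_mem_nhdsWithin] with t h ht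
    rw [div_lt_iff₀ (sub_pos.2 ht)]
    nlinarith [sub_pos.2 (show t < 1 from ht)]

end Barrier

lemma rpow_inv_div_one_sub_rpow {r x t : ℝ} (hr : 0 < r) (hx : 0 ≤ x) (ht : t < 1) :
    (x ^ r⁻¹ / (1 - t)) ^ r = x * (1 - t) ^ (-r) := by
  rw [Real.div_rpow (by positivity) (sub_pos.2 ht).le, Real.rpow_inv_rpow hx hr.ne',
    Real.rpow_neg (sub_pos.2 ht).le, div_eq_mul_inv]

lemma PsiSol.eventually_hasDerivAt {p a : ℝ} {ψ ψd : ℝ → ℝ} (hψ : PsiSol p a ψ ψd) :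
    ∀ᶠ t in 𝓝[<] (1 : ℝ),
      HasDerivAt ψ (p / (p - 1) * (a ^ (2 - p) * (1 - t) - ψ t ^ (p / (p - 1))⁻¹)) t := by
  filter_upwards [Ioo_mem_nhdsLT zero_lt_one] with t ht
  refine ((hψ.1 t (Ioo_subset_Ico_self ht)).hasDerivAt (Ico_mem_nhds ht.1 ht.2)).congr_deriv ?_
  rw [inv_div]
  linear_combination hψ.2.2.2.2 t ht

theorem stmt15 (p a : ℝ) (hp : p ∈ Set.Ioo (1:ℝ) 2) (ha : 0 < a)
    (ψ ψd : ℝ → ℝ) (hψ : PsiSol p a ψ ψd)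
    (hpos : ∀ y ∈ Set.Ioo (0:ℝ) 1, 0 < ψ y)
    (h0 : Tendsto (fun y => ψ y * (1-y) ^ (-p)) (𝓝[<] (1:ℝ)) (𝓝 0)) :
    Tendsto (fun y => ψ y * (1-y) ^ (-(p/(p-1)))) (𝓝[<] (1:ℝ))
      (𝓝 (a ^ (p*(2-p)/(p-1)))) := by
  obtain ⟨hp1, hp2⟩ := hp
  have hq : 2 < p / (p - 1) := by rw [lt_div_iff₀ (by linarith)]; linarith
  have hqinv : (p / (p - 1))⁻¹ = (p - 1) / p := inv_div _ _
  have hψpos : ∀ᶠ t in 𝓝[<] (1 : ℝ), 0 < ψ t :=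
    Filter.mem_of_superset (Ioo_mem_nhdsLT zero_lt_one) hpos
  have hsmall :
      Tendsto (fun t => ψ t ^ (1 - (p / (p - 1))⁻¹) / (1 - t)) (𝓝[<] (1 : ℝ)) (𝓝 0) := by
    have hroot := h0.rpow_const (p := p⁻¹) (Or.inr (by positivity))
    rw [Real.zero_rpow (inv_ne_zero (by positivity))] at hroot
    refine hroot.congr' ?_
    filter_upwards [hψpos, self_mem_nhdsWithin] with t h ht
    rw [hqinv, show 1 - (p - 1) / p = p⁻¹ by field_simp; ring,
      ← rpow_inv_div_one_sub_rpow (by positivity) h.le ht,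
      Real.rpow_rpow_inv (by have : 0 < 1 - t := sub_pos.2 ht; positivity) (by positivity)]
  have hlim := (tendsto_rpow_inv_div_one_sub hq (Real.rpow_pos_of_pos ha _)
    hψ.eventually_hasDerivAt hψpos hsmall).rpow_const (p := p / (p - 1)) (Or.inr (by positivity))
  rw [← Real.rpow_mul ha.le, show (2 - p) * (p / (p - 1)) = p * (2 - p) / (p - 1) by ring] at hlim
  refine hlim.congr' ?_
  filter_upwards [hψpos, self_mem_nhdsWithin] with t h ht
  exact rpow_inv_div_one_sub_rpow (by positivity) h.le ht
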